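/- Let d = d_1 + d_2, K ⊆ ℝ^d an origin-symmetric convex body, and T = T_1 × ℝ^{d_2} with T_1 ⊆ ℝ^{d_1} convex. Let π_1 : ℝ^d → ℝ^{d_1} be the orthogonal projection and define f(s) = γ_{d_2}(K ∩ π_1^{-1}(s)) (the Gaussian fiber measure). If for every z > 0 the sets {s ∈ π_1(K) : f(s) ≥ z} and T_1 satisfy γ_{d_1}(conv(A ∪ T_1))·γ_{d_1}(A ∩ T_1) ≥ γ_{d_1}(A)·γ_{d_1}(T_1) with A = {f ≥ z}, then γ_d(conv(K ∪ T))·γ_d(K ∩ T) ≥ γ_d(K)·γ_d(T). -/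

import Mathlib

/-!
With `f(s) = γ_{d₂}(K_s)`, Cavalieri's principle gives `γ_d(K) = ∫₀^∞ γ_{d₁}{f ≥ t} dt` and
`γ_d(K ∩ T) = ∫₀^∞ γ_{d₁}({f ≥ t} ∩ T₁) dt`. Since every superlevel set lies in `π₁(K)`, the
hypothesis at each level `t` bounds `γ_{d₁}{f ≥ t} · γ_{d₁}(T₁)` by
`γ_{d₁}(C) · γ_{d₁}({f ≥ t} ∩ T₁)` with `C = conv(π₁(K) ∪ T₁)`; integrating in `t` gives
`γ_d(K) · γ_d(T) ≤ γ_{d₁}(C) · γ_d(K ∩ T)`. Finally `conv(K ∪ T)` contains the whole cylinder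
over the interior of `C`, and the boundary of the convex set `C` is Gaussian-null, so
`γ_{d₁}(C) ≤ γ_d(conv(K ∪ T))`.
-/

open MeasureTheory ProbabilityTheory
open scoped ENNReal

noncomputable def stdGaussianPi (m : ℕ) : Measure (Fin m → ℝ) :=
  Measure.pi fun _ => gaussianReal 0 1

open Set Filter Topology

instance stdGaussianPi.instIsProbabilityMeasure (m : ℕ) :
    IsProbabilityMeasure (stdGaussianPi m) := by
  unfold stdGaussianPi; infer_instance

theorem Measure.pi_absolutelyContinuous_pi :
    ∀ {n : ℕ} {μ ν : Fin n → Measure ℝ} [∀ i, SigmaFinite (μ i)] [∀ i, SigmaFinite (ν i)],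
      (∀ i, μ i ≪ ν i) → Measure.pi μ ≪ Measure.pi ν
  | 0, μ, ν, _, _, _ => by rw [Measure.pi_of_empty μ, Measure.pi_of_empty ν]
  | _ + 1, μ, ν, _, _, h => by
    rw [← ((measurePreserving_piFinSuccAbove μ 0).symm _).map_eq,
      ← ((measurePreserving_piFinSuccAbove ν 0).symm _).map_eq]
    exact ((h 0).prod (Measure.pi_absolutelyContinuous_pi fun i => h _)).map
      (MeasurableEquiv.measurable _)

theorem stdGaussianPi_absolutelyContinuous (m : ℕ) :
    stdGaussianPi m ≪ (volume : Measure (Fin m → ℝ)) := by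
  rw [stdGaussianPi, volume_pi]
  exact Measure.pi_absolutelyContinuous_pi fun _ => gaussianReal_absolutelyContinuous 0 one_ne_zero

theorem Convex.stdGaussianPi_frontier {m : ℕ} {s : Set (Fin m → ℝ)} (hs : Convex ℝ s) :
    stdGaussianPi m (frontier s) = 0 :=
  stdGaussianPi_absolutelyContinuous m (hs.addHaar_frontier volume)

theorem setOf_le_toReal_measure_fiber_eq {α β : Type*} [MeasurableSpace β] {ν : Measure β}
    [IsFiniteMeasure ν] (K : Set (α × β)) {t : ℝ}
    (ht : 0 < t) :
    {s | t ≤ (ν (Prod.mk s ⁻¹' K)).toReal} =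
      {s | s ∈ Prod.fst '' K ∧ ENNReal.ofReal t ≤ ν {y | (s, y) ∈ K}} := by
  ext s
  rw [mem_ofPred_eq, mem_ofPred_eq, ← ENNReal.ofReal_le_iff_le_toReal (measure_ne_top _ _)]
  refine ⟨fun hle => ⟨?_, hle⟩, And.right⟩
  obtain ⟨y, hy⟩ := nonempty_of_measure_ne_zero ((ENNReal.ofReal_pos.2 ht).trans_le hle).ne'
  exact ⟨(s, y), hy, rfl⟩

section Fibers

variable {α β : Type*} [MeasurableSpace α] [MeasurableSpace β] {μ : Measure α} {ν : Measure β}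

theorem Measure.prod_apply_eq_lintegral_meas_le [SFinite μ] [IsFiniteMeasure ν]
    {K : Set (α × β)} (hK : MeasurableSet K) :
    μ.prod ν K = ∫⁻ t in Ioi 0, μ {s | t ≤ (ν (Prod.mk s ⁻¹' K)).toReal} := by
  rw [Measure.prod_apply hK, ← lintegral_eq_lintegral_meas_le μ
    (ae_of_all _ fun _ => ENNReal.toReal_nonneg)
    (measurable_measure_prodMk_left hK).ennreal_toReal.aemeasurable]
  simp only [ENNReal.ofReal_toReal (measure_ne_top _ _)]

theorem Measure.prod_mul_le_of_forall_superlevelSet [SFinite μ] [IsFiniteMeasure ν]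
    {K : Set (α × β)} (hK : MeasurableSet K) {S : Set α} (hS : MeasurableSet S)
    {a c : ℝ≥0∞} (hc : c ≠ ∞)
    (h : ∀ t : ℝ, 0 < t → μ {s | t ≤ (ν (Prod.mk s ⁻¹' K)).toReal} * a ≤
      c * μ ({s | t ≤ (ν (Prod.mk s ⁻¹' K)).toReal} ∩ S)) :
    μ.prod ν K * a ≤ c * μ.prod ν (K ∩ S ×ˢ univ) := by
  have hrestrict : μ.prod ν (K ∩ S ×ˢ univ) = (μ.restrict S).prod ν K := by
    rw [← Measure.restrict_univ (μ := ν), Measure.prod_restrict, Measure.restrict_apply hK,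
      Measure.restrict_univ]
  rw [hrestrict, Measure.prod_apply_eq_lintegral_meas_le hK,
    Measure.prod_apply_eq_lintegral_meas_le hK, ← lintegral_const_mul' c _ hc]
  refine (lintegral_mul_const_le _ _).trans (setLIntegral_mono' measurableSet_Ioi fun t ht => ?_)
  rw [Measure.restrict_apply' hS]
  exact h t ht

end Fibers

section ConvexHull

variable {E F : Type*} [AddCommGroup E] [Module ℝ E] [AddCommGroup F] [Module ℝ F]

theorem Convex.mk_smul_add_smul_mem_of_singleton_prod_univ_subset {D : Set (E × F)}
    (hD : Convex ℝ D) {x : E × F} (hx : x ∈ D) {τ : E} (hτ : {τ} ×ˢ univ ⊆ D) {θ : ℝ}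
    (hθ₀ : 0 < θ) (hθ₁ : θ ≤ 1) (w : F) :
    ((1 - θ) • x.1 + θ • τ, w) ∈ D := by
  have hmem := hD hx (hτ (show (τ, θ⁻¹ • (w - (1 - θ) • x.2)) ∈ {τ} ×ˢ univ from ⟨rfl, trivial⟩))
    (sub_nonneg.2 hθ₁) hθ₀.le (by ring)
  convert hmem using 1
  ext
  · rfl
  · simp [smul_inv_smul₀ hθ₀.ne']

/-- For `τ ∈ T` and `s` interior, `s = (1 - θ) s' + θ τ` with `s' = s + ε (s - τ)` still in
`conv(π₁ K ∪ T) ⊆ π₁ conv(K ∪ T × F)` and `θ = ε / (1 + ε) > 0`; the whole line `{τ} × F`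
lies in `conv(K ∪ T × F)`, so every point `(s, w)` does too. -/
theorem interior_convexHull_fst_image_union_prod_univ_subset [TopologicalSpace E]
    [IsTopologicalAddGroup E] [ContinuousSMul ℝ E] (K : Set (E × F)) {T : Set E}
    (hT : T.Nonempty) :
    interior (convexHull ℝ (Prod.fst '' K ∪ T)) ×ˢ (univ : Set F) ⊆
      convexHull ℝ (K ∪ T ×ˢ univ) := by
  obtain ⟨τ, hτ⟩ := hT
  set D := convexHull ℝ (K ∪ T ×ˢ (univ : Set F))
  have hD : Convex ℝ D := convex_convexHull ℝ _
  have hfiber : {τ} ×ˢ univ ⊆ D := fun p hp =>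
    subset_convexHull ℝ _ (Or.inr ⟨(mem_singleton_iff.1 hp.1).symm ▸ hτ, trivial⟩)
  have hproj : convexHull ℝ (Prod.fst '' K ∪ T) ⊆ Prod.fst '' D := by
    refine convexHull_min (union_subset (image_mono ?_) fun s hs => ⟨(s, 0), ?_, rfl⟩)
      (hD.linear_image (LinearMap.fst ℝ E F))
    · exact subset_union_left.trans (subset_convexHull ℝ _)
    · exact subset_convexHull ℝ _ (Or.inr ⟨hs, trivial⟩)
  rintro ⟨s, w⟩ ⟨hs, -⟩
  have hpath : Tendsto (fun ε : ℝ => s + ε • (s - τ)) (𝓝[>] 0) (𝓝 s) := by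
    have hcont : Continuous fun ε : ℝ => s + ε • (s - τ) := by fun_prop
    simpa using (hcont.tendsto 0).mono_left nhdsWithin_le_nhds
  obtain ⟨ε, hεC, hε₀ : 0 < ε⟩ := ((hpath.eventually (isOpen_interior.mem_nhds hs)).and
    self_mem_nhdsWithin).exists
  obtain ⟨x, hxD, hx⟩ := hproj (interior_subset hεC)
  convert hD.mk_smul_add_smul_mem_of_singleton_prod_univ_subset hxD hfiber
    (θ := ε / (1 + ε)) (by positivity) ((div_le_one (by positivity)).2 (by linarith)) w using 2
  rw [hx]
  match_scalars <;> field_simp <;> ring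

end ConvexHull

theorem stmt10_general (d₁ d₂ : ℕ) (K : Set ((Fin d₁ → ℝ) × (Fin d₂ → ℝ)))
    (hKcomp : IsCompact K)
    (T₁ : Set (Fin d₁ → ℝ)) (hT₁ : Convex ℝ T₁)
    (H : ∀ z : ℝ≥0∞, 0 < z →
      let A : Set (Fin d₁ → ℝ) :=
        {s | s ∈ Prod.fst '' K ∧ z ≤ stdGaussianPi d₂ {y | (s, y) ∈ K}}
      stdGaussianPi d₁ A * stdGaussianPi d₁ T₁ ≤
        stdGaussianPi d₁ (convexHull ℝ (A ∪ T₁)) * stdGaussianPi d₁ (A ∩ T₁)) :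
    ((stdGaussianPi d₁).prod (stdGaussianPi d₂)) K *
        ((stdGaussianPi d₁).prod (stdGaussianPi d₂)) (T₁ ×ˢ Set.univ) ≤
      ((stdGaussianPi d₁).prod (stdGaussianPi d₂)) (convexHull ℝ (K ∪ T₁ ×ˢ Set.univ)) *
        ((stdGaussianPi d₁).prod (stdGaussianPi d₂)) (K ∩ T₁ ×ˢ Set.univ) := by
  rcases T₁.eq_empty_or_nonempty with rfl | hTne
  · simp
  set C := convexHull ℝ (Prod.fst '' K ∪ T₁)
  have hlevel : ∀ t : ℝ, 0 < t →
      stdGaussianPi d₁ {s | t ≤ (stdGaussianPi d₂ (Prod.mk s ⁻¹' K)).toReal} *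
          stdGaussianPi d₁ T₁ ≤
        stdGaussianPi d₁ C * stdGaussianPi d₁
          ({s | t ≤ (stdGaussianPi d₂ (Prod.mk s ⁻¹' K)).toReal} ∩ interior T₁) := by
    intro t ht
    rw [setOf_le_toReal_measure_fiber_eq K ht, measure_congr
      ((EventuallyEq.refl _ _).inter (interior_ae_eq_of_null_frontier hT₁.stdGaussianPi_frontier))]
    exact (H _ (ENNReal.ofReal_pos.2 ht)).trans (mul_le_mul_left
      (measure_mono (convexHull_mono (union_subset_union_left _ fun _ hs => hs.1))) _)
  have hCyl : stdGaussianPi d₁ C ≤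
      ((stdGaussianPi d₁).prod (stdGaussianPi d₂)) (convexHull ℝ (K ∪ T₁ ×ˢ univ)) := by
    rw [← measure_interior_of_null_frontier (convex_convexHull ℝ _).stdGaussianPi_frontier,
      ← mul_one (stdGaussianPi d₁ _), ← measure_univ (μ := stdGaussianPi d₂), ← Measure.prod_prod]
    exact measure_mono (interior_convexHull_fst_image_union_prod_univ_subset K hTne)
  calc _ = ((stdGaussianPi d₁).prod (stdGaussianPi d₂)) K * stdGaussianPi d₁ T₁ := by
        rw [Measure.prod_prod, measure_univ, mul_one]
    _ ≤ stdGaussianPi d₁ C *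
          ((stdGaussianPi d₁).prod (stdGaussianPi d₂)) (K ∩ interior T₁ ×ˢ univ) :=
        Measure.prod_mul_le_of_forall_superlevelSet hKcomp.isClosed.measurableSet
          isOpen_interior.measurableSet (measure_ne_top _ _) hlevel
    _ ≤ _ := by gcongr; exact interior_subset

/-- Lifting lemma: let `ℝ^d = ℝ^{d₁} × ℝ^{d₂}`, `K` an origin-symmetric convex body,
`T = T₁ × ℝ^{d₂}` with `T₁` convex, and `f(s) = γ_{d₂}(K ∩ π₁⁻¹(s))`. If for every `z > 0`
the set `A = {s ∈ π₁(K) : f(s) ≥ z}` together with `T₁` satisfies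
`γ_{d₁}(conv(A ∪ T₁))·γ_{d₁}(A ∩ T₁) ≥ γ_{d₁}(A)·γ_{d₁}(T₁)`, then
`γ_d(conv(K ∪ T))·γ_d(K ∩ T) ≥ γ_d(K)·γ_d(T)`. -/
theorem stmt10 (d₁ d₂ : ℕ) (K : Set ((Fin d₁ → ℝ) × (Fin d₂ → ℝ)))
    (hKconv : Convex ℝ K) (hKsymm : K = -K) (hKcomp : IsCompact K)
    (hKint : (interior K).Nonempty)
    (T₁ : Set (Fin d₁ → ℝ)) (hT₁ : Convex ℝ T₁)
    (H : ∀ z : ℝ≥0∞, 0 < z →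
      let A : Set (Fin d₁ → ℝ) :=
        {s | s ∈ Prod.fst '' K ∧ z ≤ stdGaussianPi d₂ {y | (s, y) ∈ K}}
      stdGaussianPi d₁ A * stdGaussianPi d₁ T₁ ≤
        stdGaussianPi d₁ (convexHull ℝ (A ∪ T₁)) * stdGaussianPi d₁ (A ∩ T₁)) :
    ((stdGaussianPi d₁).prod (stdGaussianPi d₂)) K *
        ((stdGaussianPi d₁).prod (stdGaussianPi d₂)) (T₁ ×ˢ Set.univ) ≤
      ((stdGaussianPi d₁).prod (stdGaussianPi d₂)) (convexHull ℝ (K ∪ T₁ ×ˢ Set.univ)) *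
        ((stdGaussianPi d₁).prod (stdGaussianPi d₂)) (K ∩ T₁ ×ˢ Set.univ) :=
  stmt10_general d₁ d₂ K hKcomp T₁ hT₁ H
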